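/- (Theorem 5(ii), inner limit) Let ε ∈ (0,1], let p⁰ be an initial statistics on a finite type set Ω closed under threshold reduction (with d_w ≥ 1, r_w ≤ k_w, nondecreasing costs c_w with c_w(0)=0), and set α_ε = ε·d_min/⟨p⁰,d⟩, d_min = min_w d_w, d_max = max_w d_w, k_max = max_w k_w. For each positive integer N let Δ_N = ((1−α_ε)/(2N))·(d_max·2^{k_max+1}·k_max/⟨p⁰,d⟩ + 1), let V_N be the infimum of C(ξ) over interventions ξ satisfying φ_{p(ξ)}((1−α_ε)i/N) − (1−α_ε)i/N ≥ Δ_N for i = 0,…,N, and let V_α be the infimum of C(ξ) over interventions ξ satisfying φ_{p(ξ)}(z) > z for all z ∈ [0,1−α_ε]. Assume V_α is attained by some intervention ξ^α. Then V_N → V_α as N → ∞. -/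
import Mathlib


/-- `φ_{k,r}(z) = ∑_{u=r}^{k} (k choose u) z^u (1-z)^{k-u}`. -/
def phiKR (k r : ℕ) (z : ℝ) : ℝ :=
  ∑ u ∈ Finset.Icc r k, (k.choose u : ℝ) * z ^ u * (1 - z) ^ (k - u)

/-- `φ_p(z) = ⟨p,d⟩⁻¹ ∑_w p_w d_w φ_{k_w, r_w}(z)`. -/
noncomputable def phiP {Ω : Type*} [Fintype Ω] (d k r : Ω → ℕ) (p : Ω → ℝ) (z : ℝ) : ℝ :=
  (∑ w, p w * (d w : ℝ))⁻¹ * ∑ w, p w * (d w : ℝ) * phiKR (k w) (r w) z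

/-- The post-intervention statistics `p(ξ)`. -/
def postP {Ω : Type*} [Fintype Ω] [DecidableEq Ω] (down : Ω → ℕ → Ω)
    (r : Ω → ℕ) (ξ : Ω → ℕ → ℝ) : Ω → ℝ :=
  fun w => ∑ w', ∑ η ∈ Finset.range (r w' + 1), if down w' η = w then ξ w' η else 0

/-- `ξ` is an intervention with respect to the initial statistics `p⁰`. -/
def IsIntervention {Ω : Type*} [Fintype Ω] (r : Ω → ℕ) (p0 : Ω → ℝ)
    (ξ : Ω → ℕ → ℝ) : Prop :=
  (∀ w η, 0 ≤ ξ w η) ∧ (∀ w η, ξ w η ≤ 1) ∧ (∀ w η, r w < η → ξ w η = 0) ∧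
  (∀ w, ∑ η ∈ Finset.range (r w + 1), ξ w η = p0 w)

/-- The cost `C(ξ) = ∑_w ∑_{η=0}^{r_w} c_w(η) ξ_w(η)` of an intervention. -/
def costC {Ω : Type*} [Fintype Ω] (r : Ω → ℕ) (c : Ω → ℕ → ℝ)
    (ξ : Ω → ℕ → ℝ) : ℝ :=
  ∑ w, ∑ η ∈ Finset.range (r w + 1), c w η * ξ w η


lemma abs_pow_sub_pow_le01 (a b : ℝ) (ha : a ∈ Set.Icc (0:ℝ) 1)
    (hb : b ∈ Set.Icc (0:ℝ) 1) (m : ℕ) : |a ^ m - b ^ m| ≤ m * |a - b| := by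
  rw [← geom_sum₂_mul a b m, abs_mul]
  have hbound : |∑ i ∈ Finset.range m, a ^ i * b ^ (m - 1 - i)| ≤ m := by
    calc |∑ i ∈ Finset.range m, a ^ i * b ^ (m - 1 - i)|
        ≤ ∑ i ∈ Finset.range m, |a ^ i * b ^ (m - 1 - i)| := Finset.abs_sum_le_sum_abs _ _
      _ ≤ ∑ _i ∈ Finset.range m, (1:ℝ) := by
          refine Finset.sum_le_sum fun i _ => ?_
          rw [abs_mul, abs_pow, abs_pow]
          have h1 : |a| ≤ 1 := abs_le.2 ⟨by linarith [ha.1], ha.2⟩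
          have h2 : |b| ≤ 1 := abs_le.2 ⟨by linarith [hb.1], hb.2⟩
          calc |a| ^ i * |b| ^ (m-1-i) ≤ 1 ^ i * 1 ^ (m-1-i) :=
                mul_le_mul (pow_le_pow_left₀ (abs_nonneg a) h1 i)
                  (pow_le_pow_left₀ (abs_nonneg b) h2 (m-1-i)) (by positivity) (by positivity)
            _ = 1 := by simp
      _ = m := by simp
  exact mul_le_mul_of_nonneg_right hbound (abs_nonneg _) |>.trans_eq rfl

lemma abs_monomial_sub_le (k u : ℕ) (hu : u ≤ k) (x y : ℝ) (hx : x ∈ Set.Icc (0:ℝ) 1)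
    (hy : y ∈ Set.Icc (0:ℝ) 1) :
    |x ^ u * (1-x) ^ (k-u) - y ^ u * (1-y) ^ (k-u)| ≤ (k:ℝ) * |x - y| := by
  have hx1 : (1:ℝ) - x ∈ Set.Icc (0:ℝ) 1 := ⟨by linarith [hx.2], by linarith [hx.1]⟩
  have hy1 : (1:ℝ) - y ∈ Set.Icc (0:ℝ) 1 := ⟨by linarith [hy.2], by linarith [hy.1]⟩
  have hax : |(1:ℝ)-x| ≤ 1 := abs_le.2 ⟨by linarith [hx1.1], hx1.2⟩
  have hay : |y| ≤ 1 := abs_le.2 ⟨by linarith [hy.1], hy.2⟩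
  have hsplit : x ^ u * (1-x) ^ (k-u) - y ^ u * (1-y) ^ (k-u)
      = (x ^ u - y ^ u) * (1-x) ^ (k-u) + y ^ u * ((1-x) ^ (k-u) - (1-y) ^ (k-u)) := by ring
  have h1 : |(x ^ u - y ^ u) * (1-x) ^ (k-u)| ≤ (u:ℝ) * |x - y| := by
    rw [abs_mul]
    have ha : |(1-x) ^ (k-u)| ≤ 1 := by
      rw [abs_pow]; exact pow_le_one₀ (abs_nonneg _) hax
    have hb := abs_pow_sub_pow_le01 x y hx hy u
    calc |x ^ u - y ^ u| * |(1-x) ^ (k-u)| ≤ ((u:ℝ) * |x-y|) * 1 :=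
          mul_le_mul hb ha (abs_nonneg _) (by positivity)
      _ = (u:ℝ) * |x - y| := mul_one _
  have h2 : |y ^ u * ((1-x) ^ (k-u) - (1-y) ^ (k-u))| ≤ ((k-u : ℕ):ℝ) * |x - y| := by
    rw [abs_mul]
    have ha : |y ^ u| ≤ 1 := by rw [abs_pow]; exact pow_le_one₀ (abs_nonneg _) hay
    have habs : |(1-x) - (1-y)| = |x - y| := by
      rw [show (1-x) - (1-y) = -(x-y) by ring, abs_neg]
    have hb : |(1-x) ^ (k-u) - (1-y) ^ (k-u)| ≤ ((k-u:ℕ):ℝ) * |x - y| := by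
      have := abs_pow_sub_pow_le01 _ _ hx1 hy1 (k-u)
      rwa [habs] at this
    calc |y ^ u| * |(1-x) ^ (k-u) - (1-y) ^ (k-u)| ≤ 1 * (((k-u:ℕ):ℝ) * |x-y|) :=
          mul_le_mul ha hb (abs_nonneg _) zero_le_one
      _ = ((k-u:ℕ):ℝ) * |x - y| := one_mul _
  have hsum : (u:ℝ) + ((k-u:ℕ):ℝ) = (k:ℝ) := by
    rw [← Nat.cast_add, Nat.add_sub_cancel' hu]
  calc |x ^ u * (1-x) ^ (k-u) - y ^ u * (1-y) ^ (k-u)|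
      ≤ |(x ^ u - y ^ u) * (1-x) ^ (k-u)| + |y ^ u * ((1-x) ^ (k-u) - (1-y) ^ (k-u))| := by
        rw [hsplit]; exact abs_add_le _ _
    _ ≤ (u:ℝ) * |x - y| + ((k-u:ℕ):ℝ) * |x - y| := add_le_add h1 h2
    _ = (k:ℝ) * |x - y| := by rw [← add_mul, hsum]

lemma phiKR_abs_sub_le (k r : ℕ) (x y : ℝ) (hx : x ∈ Set.Icc (0:ℝ) 1)
    (hy : y ∈ Set.Icc (0:ℝ) 1) :
    |phiKR k r x - phiKR k r y| ≤ (k : ℝ) * 2 ^ k * |x - y| := by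
  unfold phiKR
  rw [← Finset.sum_sub_distrib]
  have step1 : ∀ u ∈ Finset.Icc r k,
      |(k.choose u : ℝ) * x ^ u * (1-x) ^ (k-u) - (k.choose u : ℝ) * y ^ u * (1-y) ^ (k-u)|
      ≤ (k.choose u : ℝ) * ((k:ℝ) * |x - y|) := by
    intro u hu
    have hu' : u ≤ k := (Finset.mem_Icc.mp hu).2
    have key := abs_monomial_sub_le k u hu' x y hx hy
    have : (k.choose u : ℝ) * x ^ u * (1-x) ^ (k-u) - (k.choose u : ℝ) * y ^ u * (1-y) ^ (k-u)
        = (k.choose u : ℝ) * (x ^ u * (1-x) ^ (k-u) - y ^ u * (1-y) ^ (k-u)) := by ring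
    rw [this, abs_mul, abs_of_nonneg (show (0:ℝ) ≤ (k.choose u:ℝ) by positivity)]
    exact mul_le_mul_of_nonneg_left key (by positivity)
  have hchoose : ∑ u ∈ Finset.Icc r k, (k.choose u : ℝ) ≤ (2:ℝ) ^ k := by
    calc ∑ u ∈ Finset.Icc r k, (k.choose u : ℝ)
        ≤ ∑ u ∈ Finset.range (k+1), (k.choose u : ℝ) := by
          refine Finset.sum_le_sum_of_subset_of_nonneg ?_ fun i _ _ => by positivity
          intro u hu
          simp only [Finset.mem_Icc] at hu
          simp [Finset.mem_range, Nat.lt_succ_iff, hu.2]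
      _ = (2:ℝ) ^ k := by rw [← Nat.cast_sum, Nat.sum_range_choose]; push_cast; ring
  calc |∑ u ∈ Finset.Icc r k, ((k.choose u : ℝ) * x ^ u * (1-x) ^ (k-u)
          - (k.choose u : ℝ) * y ^ u * (1-y) ^ (k-u))|
      ≤ ∑ u ∈ Finset.Icc r k, |(k.choose u : ℝ) * x ^ u * (1-x) ^ (k-u)
          - (k.choose u : ℝ) * y ^ u * (1-y) ^ (k-u)| := Finset.abs_sum_le_sum_abs _ _
    _ ≤ ∑ u ∈ Finset.Icc r k, (k.choose u : ℝ) * ((k:ℝ) * |x - y|) :=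
        Finset.sum_le_sum step1
    _ = (∑ u ∈ Finset.Icc r k, (k.choose u : ℝ)) * ((k:ℝ) * |x - y|) := by
        rw [Finset.sum_mul]
    _ ≤ (2:ℝ) ^ k * ((k:ℝ) * |x - y|) :=
        mul_le_mul_of_nonneg_right hchoose (by positivity)
    _ = (k:ℝ) * 2 ^ k * |x - y| := by ring

lemma phiKR_nonneg (k r : ℕ) (z : ℝ) (hz : z ∈ Set.Icc (0:ℝ) 1) : 0 ≤ phiKR k r z := by
  unfold phiKR
  refine Finset.sum_nonneg fun u _ => ?_
  have h1 : (0:ℝ) ≤ z := hz.1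
  have h2 : (0:ℝ) ≤ 1 - z := by linarith [hz.2]
  positivity

lemma phiKR_zero_zero (z : ℝ) : phiKR 0 0 z = 1 := by simp [phiKR]

lemma phiKR_continuous (k r : ℕ) : Continuous (phiKR k r) := by
  unfold phiKR
  exact continuous_finset_sum _ fun u _ => by fun_prop


section Helpers
variable {Ω : Type*} [Fintype Ω] [DecidableEq Ω]

lemma phiP_continuous (d k r : Ω → ℕ) (p : Ω → ℝ) : Continuous (phiP d k r p) := by
  unfold phiP
  exact continuous_const.mul (continuous_finset_sum _ fun w _ =>
    continuous_const.mul (phiKR_continuous (k w) (r w)))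

lemma phiP_nonneg (d k r : Ω → ℕ) (p : Ω → ℝ) (hp : ∀ w, 0 ≤ p w) (z : ℝ)
    (hz : z ∈ Set.Icc (0:ℝ) 1) : 0 ≤ phiP d k r p z := by
  unfold phiP
  have h1 : (0:ℝ) ≤ (∑ w, p w * (d w : ℝ))⁻¹ :=
    inv_nonneg.2 (Finset.sum_nonneg fun w _ => mul_nonneg (hp w) (Nat.cast_nonneg _))
  refine mul_nonneg h1 (Finset.sum_nonneg fun w _ => ?_)
  exact mul_nonneg (mul_nonneg (hp w) (Nat.cast_nonneg _)) (phiKR_nonneg (k w) (r w) z hz)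

lemma phiP_abs_sub_le (d k r : Ω → ℕ) (p : Ω → ℝ) (hp : ∀ w, 0 ≤ p w)
    (hS : 0 < ∑ w, p w * (d w : ℝ)) (kmax : ℕ) (hk : ∀ w, k w ≤ kmax)
    (x y : ℝ) (hx : x ∈ Set.Icc (0:ℝ) 1) (hy : y ∈ Set.Icc (0:ℝ) 1) :
    |phiP d k r p x - phiP d k r p y| ≤ (kmax : ℝ) * 2 ^ kmax * |x - y| := by
  unfold phiP
  rw [← mul_sub, ← Finset.sum_sub_distrib, abs_mul,
    abs_of_nonneg (inv_nonneg.2 hS.le)]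
  have hterm : ∀ w ∈ Finset.univ (α := Ω),
      |p w * (d w : ℝ) * phiKR (k w) (r w) x - p w * (d w : ℝ) * phiKR (k w) (r w) y|
      ≤ p w * (d w : ℝ) * ((kmax:ℝ) * 2 ^ kmax * |x - y|) := by
    intro w _
    have hpd : (0:ℝ) ≤ p w * (d w : ℝ) := mul_nonneg (hp w) (Nat.cast_nonneg _)
    rw [← mul_sub, abs_mul, abs_of_nonneg hpd]
    refine mul_le_mul_of_nonneg_left ?_ hpd
    refine (phiKR_abs_sub_le (k w) (r w) x y hx hy).trans ?_
    have h1 : ((k w : ℝ)) ≤ (kmax : ℝ) := by exact_mod_cast hk w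
    have h2 : ((2:ℝ)) ^ (k w) ≤ 2 ^ kmax := by
      exact pow_le_pow_right₀ one_le_two (hk w)
    have h3 : (k w:ℝ) * 2 ^ (k w) ≤ (kmax:ℝ) * 2 ^ kmax :=
      mul_le_mul h1 h2 (by positivity) (by positivity)
    exact mul_le_mul_of_nonneg_right h3 (abs_nonneg _)
  calc (∑ w, p w * (d w:ℝ))⁻¹ * |∑ w, (p w * (d w:ℝ) * phiKR (k w) (r w) x
          - p w * (d w:ℝ) * phiKR (k w) (r w) y)|
      ≤ (∑ w, p w * (d w:ℝ))⁻¹ * ∑ w, p w * (d w:ℝ) * ((kmax:ℝ) * 2 ^ kmax * |x - y|) := by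
        refine mul_le_mul_of_nonneg_left ?_ (inv_nonneg.2 hS.le)
        exact (Finset.abs_sum_le_sum_abs _ _).trans (Finset.sum_le_sum hterm)
    _ = (kmax:ℝ) * 2 ^ kmax * |x - y| := by
        rw [← Finset.sum_mul, inv_mul_cancel_left₀ hS.ne']

lemma postP_nonneg (down : Ω → ℕ → Ω) (r : Ω → ℕ) (ξ : Ω → ℕ → ℝ)
    (hξ : ∀ w η, 0 ≤ ξ w η) (w : Ω) : 0 ≤ postP down r ξ w := by
  unfold postP
  refine Finset.sum_nonneg fun w' _ => Finset.sum_nonneg fun η _ => ?_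
  split <;> simp [hξ w' η]

lemma postP_sum_mul (down : Ω → ℕ → Ω) (d r : Ω → ℕ) (ξ : Ω → ℕ → ℝ) (p0 : Ω → ℝ)
    (hd' : ∀ w η, η ≤ r w → d (down w η) = d w)
    (hsum : ∀ w, ∑ η ∈ Finset.range (r w + 1), ξ w η = p0 w) :
    ∑ w, postP down r ξ w * (d w : ℝ) = ∑ w, p0 w * (d w : ℝ) := by
  unfold postP
  simp only [Finset.sum_mul]
  rw [Finset.sum_comm]
  refine Finset.sum_congr rfl fun w' _ => ?_
  rw [Finset.sum_comm]
  rw [show ∑ η ∈ Finset.range (r w' + 1), ∑ w, (if down w' η = w then ξ w' η else 0) * (d w:ℝ)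
      = ∑ η ∈ Finset.range (r w' + 1), ξ w' η * (d w' : ℝ) from ?_]
  · rw [← Finset.sum_mul, hsum]
  refine Finset.sum_congr rfl fun η hη => ?_
  have hη' : η ≤ r w' := Finset.mem_range_succ_iff.mp hη
  simp only [ite_mul, zero_mul, Finset.sum_ite_eq, Finset.mem_univ, if_true]
  rw [hd' w' η hη']

lemma costC_nonneg (r : Ω → ℕ) (c : Ω → ℕ → ℝ) (ξ : Ω → ℕ → ℝ)
    (hc : ∀ w η, 0 ≤ c w η) (hξ : ∀ w η, 0 ≤ ξ w η) : 0 ≤ costC r c ξ := by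
  unfold costC
  exact Finset.sum_nonneg fun w _ => Finset.sum_nonneg fun η _ =>
    mul_nonneg (hc w η) (hξ w η)

end Helpers

set_option maxHeartbeats 2000000 in
/-- (Theorem 5(ii), inner limit) The optimal values `V_N` of the discretized
problems converge, as `N → ∞`, to the optimal value `V_α` of the relaxed
problem, provided the latter is attained. -/
theorem discretized_values_tendsto_relaxed_value
    {Ω : Type*} [Fintype Ω] [Nonempty Ω] [DecidableEq Ω]
    (d k r : Ω → ℕ) (down : Ω → ℕ → Ω)
    (hd : ∀ w, 1 ≤ d w) (hrk : ∀ w, r w ≤ k w)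
    (hinj : Function.Injective fun w => (d w, k w, r w))
    (hdown : ∀ w, ∀ j ≤ r w,
      d (down w j) = d w ∧ k (down w j) = k w ∧ r (down w j) = r w - j)
    (c : Ω → ℕ → ℝ) (hc0 : ∀ w, c w 0 = 0) (hcmono : ∀ w, Monotone (c w))
    (hcnonneg : ∀ w η, 0 ≤ c w η)
    (p0 : Ω → ℝ) (hp00 : ∀ w, 0 ≤ p0 w) (hp01 : ∀ w, p0 w ≤ 1)
    (hp0sum : ∑ w, p0 w = 1)
    (ε : ℝ) (hε0 : 0 < ε) (hε1 : ε ≤ 1)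
    (dmin dmax kmax : ℕ)
    (hdmin : dmin = Finset.univ.inf' Finset.univ_nonempty d)
    (hdmax : dmax = Finset.univ.sup' Finset.univ_nonempty d)
    (hkmax : kmax = Finset.univ.sup' Finset.univ_nonempty k)
    (α : ℝ) (hα : α = ε * (dmin : ℝ) / (∑ w, p0 w * (d w : ℝ)))
    (Vα : ℝ)
    (hVα : Vα = sInf {y : ℝ | ∃ ξ : Ω → ℕ → ℝ, IsIntervention r p0 ξ ∧
      (∀ z ∈ Set.Icc (0 : ℝ) (1 - α), z < phiP d k r (postP down r ξ) z) ∧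
      y = costC r c ξ})
    (ξα : Ω → ℕ → ℝ) (hξα : IsIntervention r p0 ξα)
    (hξαfeas : ∀ z ∈ Set.Icc (0 : ℝ) (1 - α), z < phiP d k r (postP down r ξα) z)
    (hξαopt : costC r c ξα = Vα) :
    Filter.Tendsto
      (fun N : ℕ => sInf {y : ℝ | ∃ ξ : Ω → ℕ → ℝ, IsIntervention r p0 ξ ∧
        (∀ i : ℕ, i ≤ N →
          (1 - α) / (2 * (N : ℝ)) *
              ((dmax : ℝ) * 2 ^ (kmax + 1) * (kmax : ℝ) /
                (∑ w, p0 w * (d w : ℝ)) + 1) ≤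
            phiP d k r (postP down r ξ) ((1 - α) * (i : ℝ) / (N : ℝ)) -
              (1 - α) * (i : ℝ) / (N : ℝ)) ∧
        y = costC r c ξ})
      Filter.atTop (nhds Vα) := by
  classical
  -- basic facts
  have hdminle : ∀ w, dmin ≤ d w := fun w => hdmin ▸ Finset.inf'_le _ (Finset.mem_univ w)
  have hdmaxge : ∀ w, d w ≤ dmax := fun w => hdmax ▸ Finset.le_sup' _ (Finset.mem_univ w)
  have hkmaxge : ∀ w, k w ≤ kmax := fun w => hkmax ▸ Finset.le_sup' _ (Finset.mem_univ w)
  have hdmin1 : 1 ≤ dmin := hdmin ▸ Finset.le_inf' _ _ fun w _ => hd w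
  have hdmax1 : 1 ≤ dmax := le_trans (hd (Classical.arbitrary Ω)) (hdmaxge _)
  have hS0ge1 : (1:ℝ) ≤ ∑ w, p0 w * (d w : ℝ) := by
    calc (1:ℝ) = ∑ w, p0 w := hp0sum.symm
      _ ≤ ∑ w, p0 w * (d w : ℝ) := Finset.sum_le_sum fun w _ =>
          le_mul_of_one_le_right (hp00 w) (by exact_mod_cast hd w)
  have hS0pos : (0:ℝ) < ∑ w, p0 w * (d w : ℝ) := lt_of_lt_of_le one_pos hS0ge1
  have hS0le : (∑ w, p0 w * (d w : ℝ)) ≤ (dmax : ℝ) := by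
    calc (∑ w, p0 w * (d w : ℝ)) ≤ ∑ w, p0 w * (dmax : ℝ) := Finset.sum_le_sum fun w _ =>
          mul_le_mul_of_nonneg_left (by exact_mod_cast hdmaxge w) (hp00 w)
      _ = (dmax : ℝ) := by rw [← Finset.sum_mul, hp0sum, one_mul]
  have hdminR : (1:ℝ) ≤ (dmin:ℝ) := by exact_mod_cast hdmin1
  have hα0 : 0 < α := by
    rw [hα]; exact div_pos (mul_pos hε0 (by linarith)) hS0pos
  have hα1 : α ≤ 1 := by
    rw [hα, div_le_one hS0pos]
    have h1 : ε * (dmin:ℝ) ≤ (dmin:ℝ) := by nlinarith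
    have h2 : (dmin:ℝ) ≤ ∑ w, p0 w * (d w : ℝ) := by
      calc (dmin:ℝ) = ∑ w, p0 w * (dmin:ℝ) := by rw [← Finset.sum_mul, hp0sum, one_mul]
        _ ≤ ∑ w, p0 w * (d w : ℝ) := Finset.sum_le_sum fun w _ =>
            mul_le_mul_of_nonneg_left (by exact_mod_cast hdminle w) (hp00 w)
    linarith
  -- facts about interventions
  have hpost : ∀ ξ : Ω → ℕ → ℝ, IsIntervention r p0 ξ →
      (∀ w, 0 ≤ postP down r ξ w) ∧
      (∑ w, postP down r ξ w * (d w : ℝ) = ∑ w, p0 w * (d w : ℝ)) := by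
    intro ξ hξ
    exact ⟨postP_nonneg down r ξ hξ.1,
      postP_sum_mul down d r ξ p0 (fun w η hη => (hdown w η hη).1) hξ.2.2.2⟩
  -- the do-nothing intervention
  set ξzero : Ω → ℕ → ℝ := fun w η => if η = 0 then p0 w else 0 with hξzero_def
  have hξzeroI : IsIntervention r p0 ξzero := by
    refine ⟨fun w η => ?_, fun w η => ?_, fun w η hη => ?_, fun w => ?_⟩
    · dsimp [ξzero]; split <;> simp [hp00 w]
    · dsimp [ξzero]; split
      · exact hp01 w
      · exact zero_le_one
    · dsimp [ξzero]; have : η ≠ 0 := by omega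
      simp [this]
    · dsimp [ξzero]
      rw [Finset.sum_ite_eq' (Finset.range (r w + 1)) 0 (fun _ => p0 w)]
      simp
  have hcostzero : costC r c ξzero = 0 := by
    unfold costC
    refine Finset.sum_eq_zero fun w _ => ?_
    refine Finset.sum_eq_zero fun η hη => ?_
    dsimp [ξzero]; split
    · rename_i h; rw [h, hc0]; ring
    · ring
  by_cases hcase : α < 1
  · -- main case : α < 1
    set β : ℝ := 1 - α with hβ_def
    have hβ0 : 0 < β := by simp only [hβ_def]; linarith
    have hβ1 : β ≤ 1 := by simp only [hβ_def]; linarith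
    -- the minimum of φ - id over [0, β] for ξα
    have hcont : ContinuousOn (fun z => phiP d k r (postP down r ξα) z - z)
        (Set.Icc 0 β) := ((phiP_continuous d k r _).sub continuous_id).continuousOn
    obtain ⟨z0, hz0mem, hz0min⟩ :=
      isCompact_Icc.exists_isMinOn (Set.nonempty_Icc.2 hβ0.le) hcont
    set δ : ℝ := phiP d k r (postP down r ξα) z0 - z0 with hδ_def
    have hδ0 : 0 < δ := sub_pos.2 (hξαfeas z0 hz0mem)
    set K : ℝ := (dmax : ℝ) * 2 ^ (kmax + 1) * (kmax : ℝ) / (∑ w, p0 w * (d w : ℝ))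
      with hK_def
    have hKnn : 0 ≤ K := by
      apply div_nonneg _ hS0pos.le; positivity
    set C : ℝ := β * (K + 1) / 2 with hC_def
    have hΔeq : ∀ N : ℕ, β / (2 * (N:ℝ)) * (K + 1) = C / N := by
      intro N
      rcases eq_or_ne (N:ℝ) 0 with h | h
      · simp [h, hC_def]
      · field_simp [hC_def]
        try ring
    have hev1 : ∀ᶠ N : ℕ in Filter.atTop, C / (N:ℝ) < δ :=
      (tendsto_const_div_atTop_nhds_zero_nat C).eventually (gt_mem_nhds hδ0)
    have hev2 : ∀ᶠ N : ℕ in Filter.atTop, 1 ≤ N := Filter.eventually_ge_atTop 1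
    refine Filter.Tendsto.congr' ?_ (tendsto_const_nhds (x := Vα))
    filter_upwards [hev1, hev2] with N hN1 hN2
    have hNpos : (0:ℝ) < (N:ℝ) := by exact_mod_cast hN2
    -- ξα is feasible for the N-th discretized problem
    have hgridα : ∀ i : ℕ, i ≤ N →
        (1 - α) / (2 * (N : ℝ)) * (K + 1) ≤
          phiP d k r (postP down r ξα) ((1 - α) * (i : ℝ) / (N : ℝ)) -
            (1 - α) * (i : ℝ) / (N : ℝ) := by
      intro i hi
      have hzi : (1 - α) * (i : ℝ) / (N : ℝ) ∈ Set.Icc (0:ℝ) β := by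
        constructor
        · positivity
        · rw [div_le_iff₀ hNpos]
          have : (i:ℝ) ≤ (N:ℝ) := by exact_mod_cast hi
          nlinarith
      have hmin := isMinOn_iff.mp hz0min _ hzi
      have : β / (2 * (N:ℝ)) * (K + 1) = C / N := hΔeq N
      simp only [← hβ_def] at *
      linarith
    have hVαmem : Vα ∈ {y : ℝ | ∃ ξ : Ω → ℕ → ℝ, IsIntervention r p0 ξ ∧
        (∀ i : ℕ, i ≤ N →
          (1 - α) / (2 * (N : ℝ)) * ((dmax : ℝ) * 2 ^ (kmax + 1) * (kmax : ℝ) /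
              (∑ w, p0 w * (d w : ℝ)) + 1) ≤
            phiP d k r (postP down r ξ) ((1 - α) * (i : ℝ) / (N : ℝ)) -
              (1 - α) * (i : ℝ) / (N : ℝ)) ∧
        y = costC r c ξ} := ⟨ξα, hξα, hgridα, hξαopt.symm⟩
    -- any feasible point of the discretized problem is feasible for the relaxed one
    have hsubset : ∀ ξ : Ω → ℕ → ℝ, IsIntervention r p0 ξ →
        (∀ i : ℕ, i ≤ N →
          (1 - α) / (2 * (N : ℝ)) * (K + 1) ≤
            phiP d k r (postP down r ξ) ((1 - α) * (i : ℝ) / (N : ℝ)) -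
              (1 - α) * (i : ℝ) / (N : ℝ)) →
        ∀ z ∈ Set.Icc (0 : ℝ) (1 - α), z < phiP d k r (postP down r ξ) z := by
      intro ξ hξ hgrid z hz
      obtain ⟨hpnn, hpsum⟩ := hpost ξ hξ
      have hpS : 0 < ∑ w, postP down r ξ w * (d w : ℝ) := by rw [hpsum]; exact hS0pos
      rcases Nat.eq_zero_or_pos kmax with hk0 | hk1
      · -- kmax = 0 : φ is constantly 1
        have hφ1 : phiP d k r (postP down r ξ) z = 1 := by
          unfold phiP
          have hone : ∀ w : Ω, phiKR (k w) (r w) z = 1 := by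
            intro w
            have hkw : k w = 0 := Nat.le_zero.mp (hk0 ▸ hkmaxge w)
            have hrw : r w = 0 := Nat.le_zero.mp (hkw ▸ hrk w)
            rw [hkw, hrw, phiKR_zero_zero]
          simp only [hone, mul_one]
          exact inv_mul_cancel₀ hpS.ne'
        rw [hφ1]
        have := hz.2
        simp only [← hβ_def] at this
        linarith
      · -- kmax ≥ 1 : Lipschitz argument
        set L : ℝ := (kmax : ℝ) * 2 ^ kmax with hL_def
        have hL2 : (2:ℝ) ≤ L := by
          have h1 : (1:ℝ) ≤ (kmax:ℝ) := by exact_mod_cast hk1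
          have h2 : (2:ℝ) ≤ 2 ^ kmax := by
            calc (2:ℝ) = 2 ^ 1 := (pow_one 2).symm
              _ ≤ 2 ^ kmax := pow_le_pow_right₀ one_le_two hk1
          nlinarith
        have hKL : L < K := by
          have hKalt : K = 2 * (dmax:ℝ) * L / (∑ w, p0 w * (d w : ℝ)) := by
            rw [hK_def, hL_def, pow_succ]; ring
          rw [hKalt, lt_div_iff₀ hS0pos]
          have : (1:ℝ) ≤ (dmax:ℝ) := by exact_mod_cast hdmax1
          nlinarith
        have hz2 : z ≤ β := by simp only [← hβ_def] at hz ⊢; exact hz.2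
        set t : ℝ := z * N / β with ht_def
        have ht0 : 0 ≤ t := by
          rw [ht_def]
          exact div_nonneg (mul_nonneg hz.1 (Nat.cast_nonneg N)) hβ0.le
        have htN : t ≤ N := by
          rw [ht_def, div_le_iff₀ hβ0]
          nlinarith [hz.1]
        set i : ℕ := ⌊t + 1/2⌋₊ with hi_def
        have hile : (i:ℝ) ≤ t + 1/2 := Nat.floor_le (by linarith)
        have hige : t + 1/2 < (i:ℝ) + 1 := Nat.lt_floor_add_one _
        have hiN : i ≤ N := by
          have h1 : (i:ℝ) < (N:ℝ) + 1 := by linarith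
          exact_mod_cast Nat.lt_succ_iff.mp (by exact_mod_cast h1)
        have hzeq : z = β * t / N := by
          rw [ht_def]; field_simp
        set zi : ℝ := (1 - α) * (i : ℝ) / (N : ℝ) with hzi_def
        have hzi_eq : zi = β * i / N := by rw [hzi_def, hβ_def]
        have hdist : |z - zi| ≤ β / (2 * N) := by
          have h1 : z - zi = β / N * (t - i) := by rw [hzeq, hzi_eq]; field_simp
          rw [h1, abs_mul, abs_of_nonneg (by positivity : (0:ℝ) ≤ β / N)]
          have h2 : |t - (i:ℝ)| ≤ 1/2 := abs_le.2 ⟨by linarith, by linarith⟩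
          calc β / N * |t - (i:ℝ)| ≤ β / N * (1/2) :=
              mul_le_mul_of_nonneg_left h2 (by positivity)
            _ = β / (2 * N) := by ring
        have hz01 : z ∈ Set.Icc (0:ℝ) 1 := ⟨hz.1, hz2.trans hβ1⟩
        have hzi01 : zi ∈ Set.Icc (0:ℝ) 1 := by
          rw [hzi_eq]
          constructor
          · positivity
          · rw [div_le_one hNpos]
            have : (i:ℝ) ≤ (N:ℝ) := by exact_mod_cast hiN
            nlinarith
        have hlip := phiP_abs_sub_le d k r (postP down r ξ) hpnn hpS kmax hkmaxge
          z zi hz01 hzi01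
        rw [← hL_def] at hlip
        have e1 : phiP d k r (postP down r ξ) zi - phiP d k r (postP down r ξ) z
            ≤ L * (β / (2 * N)) := by
          have h3 : |phiP d k r (postP down r ξ) z - phiP d k r (postP down r ξ) zi|
              ≤ L * (β / (2 * N)) := by
            refine hlip.trans ?_
            exact mul_le_mul_of_nonneg_left hdist (by linarith)
          have := (abs_le.mp h3).1
          linarith
        have e2 : z - zi ≤ β / (2 * N) := (le_abs_self _).trans hdist
        have e0 : β / (2 * (N : ℝ)) * (K + 1) ≤
            phiP d k r (postP down r ξ) zi - zi := by
          have := hgrid i hiN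
          simp only [← hβ_def, ← hzi_def] at this
          exact this
        have h2pos : 0 < β / (2 * (N:ℝ)) := by positivity
        nlinarith [mul_pos h2pos (sub_pos.2 hKL)]
    -- conclude : the two infima coincide
    have hlb : ∀ y ∈ {y : ℝ | ∃ ξ : Ω → ℕ → ℝ, IsIntervention r p0 ξ ∧
        (∀ i : ℕ, i ≤ N →
          (1 - α) / (2 * (N : ℝ)) * ((dmax : ℝ) * 2 ^ (kmax + 1) * (kmax : ℝ) /
              (∑ w, p0 w * (d w : ℝ)) + 1) ≤
            phiP d k r (postP down r ξ) ((1 - α) * (i : ℝ) / (N : ℝ)) -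
              (1 - α) * (i : ℝ) / (N : ℝ)) ∧
        y = costC r c ξ}, 0 ≤ y := by
      rintro y ⟨ξ, hξ, -, rfl⟩
      exact costC_nonneg r c ξ hcnonneg hξ.1
    have hlbα : ∀ y ∈ {y : ℝ | ∃ ξ : Ω → ℕ → ℝ, IsIntervention r p0 ξ ∧
        (∀ z ∈ Set.Icc (0 : ℝ) (1 - α), z < phiP d k r (postP down r ξ) z) ∧
        y = costC r c ξ}, 0 ≤ y := by
      rintro y ⟨ξ, hξ, -, rfl⟩
      exact costC_nonneg r c ξ hcnonneg hξ.1
    refine le_antisymm ?_ ?_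
    · rw [hVα]
      refine csInf_le_csInf ⟨0, hlbα⟩ ⟨Vα, hVαmem⟩ ?_
      rintro y ⟨ξ, hξ, hgrid, rfl⟩
      exact ⟨ξ, hξ, hsubset ξ hξ hgrid, rfl⟩
    · exact csInf_le ⟨0, hlb⟩ hVαmem
  · -- degenerate case : α = 1
    have hαeq : α = 1 := le_antisymm hα1 (not_lt.mp hcase)
    have hβ : 1 - α = 0 := by rw [hαeq]; ring
    -- every intervention is feasible for the discretized problems
    have htriv : ∀ ξ : Ω → ℕ → ℝ, IsIntervention r p0 ξ → ∀ N : ℕ, ∀ i : ℕ, i ≤ N →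
        (1 - α) / (2 * (N : ℝ)) * ((dmax : ℝ) * 2 ^ (kmax + 1) * (kmax : ℝ) /
            (∑ w, p0 w * (d w : ℝ)) + 1) ≤
          phiP d k r (postP down r ξ) ((1 - α) * (i : ℝ) / (N : ℝ)) -
            (1 - α) * (i : ℝ) / (N : ℝ) := by
      intro ξ hξ N i _
      rw [hβ]
      simp only [zero_div, zero_mul, sub_zero]
      exact phiP_nonneg d k r _ (hpost ξ hξ).1 0 ⟨le_refl 0, zero_le_one⟩
    -- each discretized value is 0
    have hVN : ∀ N : ℕ, sInf {y : ℝ | ∃ ξ : Ω → ℕ → ℝ, IsIntervention r p0 ξ ∧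
        (∀ i : ℕ, i ≤ N →
          (1 - α) / (2 * (N : ℝ)) * ((dmax : ℝ) * 2 ^ (kmax + 1) * (kmax : ℝ) /
              (∑ w, p0 w * (d w : ℝ)) + 1) ≤
            phiP d k r (postP down r ξ) ((1 - α) * (i : ℝ) / (N : ℝ)) -
              (1 - α) * (i : ℝ) / (N : ℝ)) ∧
        y = costC r c ξ} = 0 := by
      intro N
      refine le_antisymm ?_ ?_
      · refine csInf_le ⟨0, ?_⟩ ⟨ξzero, hξzeroI, htriv ξzero hξzeroI N, hcostzero.symm⟩
        rintro y ⟨ξ, hξ, -, rfl⟩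
        exact costC_nonneg r c ξ hcnonneg hξ.1
      · refine le_csInf ⟨0, ξzero, hξzeroI, htriv ξzero hξzeroI N, hcostzero.symm⟩ ?_
        rintro y ⟨ξ, hξ, -, rfl⟩
        exact costC_nonneg r c ξ hcnonneg hξ.1
    -- Vα = 0
    have hVα0 : 0 ≤ Vα := hξαopt ▸ costC_nonneg r c ξα hcnonneg hξα.1
    have hVαle : Vα ≤ Vα / 2 := by
      -- the halfway intervention
      set ξh : Ω → ℕ → ℝ := fun w η => (ξα w η + ξzero w η) / 2 with hξh_def
      have hξhI : IsIntervention r p0 ξh := by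
        obtain ⟨ha1, ha2, ha3, ha4⟩ := hξα
        obtain ⟨hb1, hb2, hb3, hb4⟩ := hξzeroI
        refine ⟨fun w η => ?_, fun w η => ?_, fun w η hη => ?_, fun w => ?_⟩
        · dsimp [ξh]; linarith [ha1 w η, hb1 w η]
        · dsimp [ξh]; linarith [ha2 w η, hb2 w η]
        · dsimp [ξh]; rw [ha3 w η hη, hb3 w η hη]; ring
        · dsimp [ξh]
          rw [← Finset.sum_div, Finset.sum_add_distrib, ha4, hb4]
          ring
      have hphalf : ∀ w, postP down r ξh w =
          (postP down r ξα w + postP down r ξzero w) / 2 := by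
        intro w
        unfold postP
        rw [← Finset.sum_add_distrib, Finset.sum_div]
        refine Finset.sum_congr rfl fun w' _ => ?_
        rw [← Finset.sum_add_distrib, Finset.sum_div]
        refine Finset.sum_congr rfl fun η _ => ?_
        dsimp [ξh]
        split <;> ring
      obtain ⟨hann, hasum⟩ := hpost ξα hξα
      obtain ⟨hznn, hzsum⟩ := hpost ξzero hξzeroI
      obtain ⟨hhnn, hhsum⟩ := hpost ξh hξhI
      have hfeash : ∀ z ∈ Set.Icc (0 : ℝ) (1 - α), z < phiP d k r (postP down r ξh) z := by
        intro z hz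
        rw [hβ] at hz
        have hz0 : z = 0 := le_antisymm hz.2 hz.1
        subst hz0
        have hα0feas : (0:ℝ) < phiP d k r (postP down r ξα) 0 :=
          hξαfeas 0 ⟨le_refl 0, by rw [hβ]⟩
        unfold phiP at hα0feas ⊢
        rw [hasum] at hα0feas
        rw [hhsum]
        have hsum_split : ∑ w, postP down r ξh w * (d w : ℝ) * phiKR (k w) (r w) 0
            = ((∑ w, postP down r ξα w * (d w : ℝ) * phiKR (k w) (r w) 0)
              + ∑ w, postP down r ξzero w * (d w : ℝ) * phiKR (k w) (r w) 0) / 2 := by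
          rw [← Finset.sum_add_distrib, Finset.sum_div]
          refine Finset.sum_congr rfl fun w _ => ?_
          rw [hphalf w]; ring
        rw [hsum_split]
        have hznn2 : 0 ≤ ∑ w, postP down r ξzero w * (d w : ℝ) * phiKR (k w) (r w) 0 :=
          Finset.sum_nonneg fun w _ => mul_nonneg (mul_nonneg (hznn w) (Nat.cast_nonneg _))
            (phiKR_nonneg _ _ 0 ⟨le_refl 0, zero_le_one⟩)
        have hinvpos : 0 < (∑ w, p0 w * (d w : ℝ))⁻¹ := inv_pos.2 hS0pos
        nlinarith [mul_nonneg hinvpos.le hznn2]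
      have hcosth : costC r c ξh = Vα / 2 := by
        have : costC r c ξh = (costC r c ξα + costC r c ξzero) / 2 := by
          unfold costC
          rw [← Finset.sum_add_distrib, Finset.sum_div]
          refine Finset.sum_congr rfl fun w _ => ?_
          rw [← Finset.sum_add_distrib, Finset.sum_div]
          refine Finset.sum_congr rfl fun η _ => ?_
          dsimp [ξh]; ring
        rw [this, hcostzero, hξαopt]; ring
      conv_lhs => rw [hVα]
      refine csInf_le ⟨0, ?_⟩ ⟨ξh, hξhI, hfeash, hcosth.symm⟩
      rintro y ⟨ξ, hξ, -, rfl⟩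
      exact costC_nonneg r c ξ hcnonneg hξ.1
    have hVαeq : Vα = 0 := le_antisymm (by linarith) hVα0
    have : (fun N : ℕ => sInf {y : ℝ | ∃ ξ : Ω → ℕ → ℝ, IsIntervention r p0 ξ ∧
        (∀ i : ℕ, i ≤ N →
          (1 - α) / (2 * (N : ℝ)) * ((dmax : ℝ) * 2 ^ (kmax + 1) * (kmax : ℝ) /
              (∑ w, p0 w * (d w : ℝ)) + 1) ≤
            phiP d k r (postP down r ξ) ((1 - α) * (i : ℝ) / (N : ℝ)) -
              (1 - α) * (i : ℝ) / (N : ℝ)) ∧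
        y = costC r c ξ}) = fun _ => Vα := by
      funext N
      rw [hVN N, hVαeq]
    rw [this]
    exact tendsto_const_nhds
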